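/- arXiv:2410.16907 — 3 statements merged into one kernel-verified Lean document; each statement's English description precedes it below -/
import Mathlib

section
/- Under the hypotheses that U_g e^{−i t H_I}(φ_S ⊗ ψ_E) = e^{−i t H_I}(π_S(g) φ_S ⊗ ψ_E) for all t ∈ ℝ and φ_S ∈ H_S, with U_g = π_S(g) ⊗ π_E(g) unitary, the restriction of U_g† H_I U_g to the subspace Σ_∥ = span{ e^{−i t H_I}(φ_S ⊗ ψ_E) : φ_S ∈ H_S, t ∈ ℝ } equals the restriction of H_I to Σ_∥; equivalently, ⟨v, U_g† H_I U_g w⟩ = ⟨v, H_I w⟩ for all v, w ∈ Σ_∥. -/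
open Matrix
open scoped Kronecker

lemma kron_conjT {dS dE : ℕ} (A : Matrix (Fin dS) (Fin dS) ℂ)
    (B : Matrix (Fin dE) (Fin dE) ℂ) : (A ⊗ₖ B)ᴴ = Aᴴ ⊗ₖ Bᴴ := by
  ext i j
  simp [conjTranspose_apply, kroneckerMap_apply, star_mul']

/-- Proposition 3: Under the covariance hypothesis
`U_g e^{−i t H_I}(φ_S ⊗ ψ_E) = e^{−i t H_I}(π_S(g) φ_S ⊗ ψ_E)` for all `t, φ_S`, with
`U_g = π_S(g) ⊗ π_E(g)` unitary, the restriction of `U_g† H_I U_g` to the subspace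
`Σ_∥ = span{ e^{−i t H_I}(φ_S ⊗ ψ_E) }` equals the restriction of `H_I` to `Σ_∥`:
`⟨v, U_g† H_I U_g w⟩ = ⟨v, H_I w⟩` for all `v, w ∈ Σ_∥`. -/
theorem strong_symmetry_on_dynamical_subspace (dS dE : ℕ)
    (HI : Matrix (Fin dS × Fin dE) (Fin dS × Fin dE) ℂ) (hH : HI.IsHermitian)
    (πS : Matrix (Fin dS) (Fin dS) ℂ) (hπS : πS ∈ Matrix.unitaryGroup (Fin dS) ℂ)
    (πE : Matrix (Fin dE) (Fin dE) ℂ) (hπE : πE ∈ Matrix.unitaryGroup (Fin dE) ℂ)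
    (ψE : Fin dE → ℂ) (hψ : star ψE ⬝ᵥ ψE = 1)
    (Ug : Matrix (Fin dS × Fin dE) (Fin dS × Fin dE) ℂ) (hUg : Ug = πS ⊗ₖ πE)
    (hcov : ∀ (t : ℝ) (φS : Fin dS → ℂ),
      Ug.mulVec
          ((NormedSpace.exp ((-(Complex.I * t)) • HI)).mulVec (fun p => φS p.1 * ψE p.2))
        = (NormedSpace.exp ((-(Complex.I * t)) • HI)).mulVec
            (fun p => πS.mulVec φS p.1 * ψE p.2))
    (Spar : Submodule ℂ (Fin dS × Fin dE → ℂ))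
    (hSpar : Spar = Submodule.span ℂ {w | ∃ (t : ℝ) (φS : Fin dS → ℂ),
      w = (NormedSpace.exp ((-(Complex.I * t)) • HI)).mulVec (fun p => φS p.1 * ψE p.2)}) :
    ∀ v ∈ Spar, ∀ w ∈ Spar,
      star v ⬝ᵥ (Ugᴴ * HI * Ug).mulVec w = star v ⬝ᵥ HI.mulVec w := by
  letI : SeminormedRing (Matrix (Fin dS × Fin dE) (Fin dS × Fin dE) ℂ) :=
    Matrix.linftyOpSemiNormedRing
  letI : NormedRing (Matrix (Fin dS × Fin dE) (Fin dS × Fin dE) ℂ) :=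
    Matrix.linftyOpNormedRing
  letI : NormedAlgebra ℂ (Matrix (Fin dS × Fin dE) (Fin dS × Fin dE) ℂ) :=
    Matrix.linftyOpNormedAlgebra
  -- unitarity of Ug
  have hUgU : Ugᴴ * Ug = 1 := by
    rw [hUg, kron_conjT, ← Matrix.mul_kronecker_mul]
    have h1 : πSᴴ * πS = 1 := by
      simpa [star] using Unitary.star_mul_self_of_mem hπS
    have h2 : πEᴴ * πE = 1 := by
      simpa [star] using Unitary.star_mul_self_of_mem hπE
    rw [h1, h2, one_kronecker_one]
  set X : Matrix (Fin dS × Fin dE) (Fin dS × Fin dE) ℂ := (-Complex.I) • HI with hX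
  have hz : ∀ z : ℂ, (-(Complex.I * z)) • HI = z • X := by
    intro z
    rw [hX, smul_smul]
    ring_nf
  -- commutation of Ug with HI on generators
  have hcomm : ∀ (t : ℝ) (φS : Fin dS → ℂ),
      HI.mulVec (Ug.mulVec
        ((NormedSpace.exp ((-(Complex.I * t)) • HI)).mulVec (fun p => φS p.1 * ψE p.2)))
      = Ug.mulVec (HI.mulVec
        ((NormedSpace.exp ((-(Complex.I * t)) • HI)).mulVec (fun p => φS p.1 * ψE p.2))) := by
    intro t φS
    set v0 : Fin dS × Fin dE → ℂ := fun p => φS p.1 * ψE p.2 with hv0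
    set v1 : Fin dS × Fin dE → ℂ := fun p => πS.mulVec φS p.1 * ψE p.2 with hv1
    have hcov' : ∀ s : ℝ,
        Ug.mulVec ((NormedSpace.exp ((s : ℂ) • X)).mulVec v0)
          = (NormedSpace.exp ((s : ℂ) • X)).mulVec v1 := by
      intro s
      have := hcov s φS
      rwa [hz (s : ℂ)] at this
    -- linear maps (A ↦ Ug.mulVec (A.mulVec v0)) and (A ↦ A.mulVec v1)
    have hEderiv : HasDerivAt
        (fun s : ℝ => NormedSpace.exp ((s : ℂ) • X))
        (NormedSpace.exp (((t : ℝ) : ℂ) • X) * X) t := by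
      have h := hasDerivAt_exp_smul_const (𝔸 := Matrix (Fin dS × Fin dE) (Fin dS × Fin dE) ℂ)
        X ((t : ℝ) : ℂ)
      have h2 := h.scomp (t : ℝ) Complex.ofRealCLM.hasDerivAt
      simp [Function.comp_def] at h2
      exact h2
    let L0 : Matrix (Fin dS × Fin dE) (Fin dS × Fin dE) ℂ →ₗ[ℂ] (Fin dS × Fin dE → ℂ) :=
      { toFun := fun A => Ug.mulVec (A.mulVec v0)
        map_add' := fun A B => by simp [Matrix.add_mulVec, Matrix.mulVec_add]
        map_smul' := fun c A => by
          simp [Matrix.smul_mulVec, Matrix.mulVec_smul] }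
    let L1 : Matrix (Fin dS × Fin dE) (Fin dS × Fin dE) ℂ →ₗ[ℂ] (Fin dS × Fin dE → ℂ) :=
      { toFun := fun A => A.mulVec v1
        map_add' := fun A B => by simp [Matrix.add_mulVec]
        map_smul' := fun c A => by simp [Matrix.smul_mulVec] }
    have hF : HasDerivAt (fun s : ℝ => Ug.mulVec ((NormedSpace.exp ((s : ℂ) • X)).mulVec v0))
        (Ug.mulVec ((NormedSpace.exp (((t : ℝ) : ℂ) • X) * X).mulVec v0)) t := by
      have h := ((L0.toContinuousLinearMap.restrictScalars ℝ).hasFDerivAt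
        (x := NormedSpace.exp (((t : ℝ) : ℂ) • X))).comp_hasDerivAt t hEderiv
      exact h
    have hG : HasDerivAt (fun s : ℝ => (NormedSpace.exp ((s : ℂ) • X)).mulVec v1)
        ((NormedSpace.exp (((t : ℝ) : ℂ) • X) * X).mulVec v1) t := by
      have h := ((L1.toContinuousLinearMap.restrictScalars ℝ).hasFDerivAt
        (x := NormedSpace.exp (((t : ℝ) : ℂ) • X))).comp_hasDerivAt t hEderiv
      exact h
    have hFG : (fun s : ℝ => Ug.mulVec ((NormedSpace.exp ((s : ℂ) • X)).mulVec v0))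
        = fun s : ℝ => (NormedSpace.exp ((s : ℂ) • X)).mulVec v1 := funext hcov'
    have hderiv_eq : Ug.mulVec ((NormedSpace.exp (((t : ℝ) : ℂ) • X) * X).mulVec v0)
        = (NormedSpace.exp (((t : ℝ) : ℂ) • X) * X).mulVec v1 := by
      have := hF
      rw [hFG] at this
      exact this.unique hG
    -- exp commutes with X
    have hcommX : NormedSpace.exp (((t : ℝ) : ℂ) • X) * X
        = X * NormedSpace.exp (((t : ℝ) : ℂ) • X) := by
      have : Commute (((t : ℝ) : ℂ) • X) X := (Commute.refl X).smul_left _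
      exact this.exp_left.eq
    rw [hcommX] at hderiv_eq
    rw [← Matrix.mulVec_mulVec, ← Matrix.mulVec_mulVec] at hderiv_eq
    rw [← hcov' t] at hderiv_eq
    -- hderiv_eq : Ug.mulVec (X.mulVec (E.mulVec v0)) = X.mulVec (Ug.mulVec (E.mulVec v0))
    have hXeq : ∀ u : Fin dS × Fin dE → ℂ, X.mulVec u = (-Complex.I) • HI.mulVec u := by
      intro u
      rw [hX, Matrix.smul_mulVec]
    rw [hXeq, hXeq, Matrix.mulVec_smul] at hderiv_eq
    have hI : (-Complex.I) ≠ 0 := by simp [Complex.I_ne_zero]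
    have := smul_right_injective (Fin dS × Fin dE → ℂ) hI hderiv_eq
    rw [hz t]
    exact this.symm
  -- main: (Ugᴴ * HI * Ug).mulVec w = HI.mulVec w for w ∈ Spar
  have hmain : ∀ w ∈ Spar, (Ugᴴ * HI * Ug).mulVec w = HI.mulVec w := by
    intro w hw
    rw [hSpar] at hw
    induction hw using Submodule.span_induction with
    | mem x hx =>
      obtain ⟨t, φS, rfl⟩ := hx
      rw [← Matrix.mulVec_mulVec, ← Matrix.mulVec_mulVec, hcomm t φS,
        Matrix.mulVec_mulVec, hUgU, Matrix.one_mulVec]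
    | zero => simp
    | add x y _ _ hx hy => rw [Matrix.mulVec_add, Matrix.mulVec_add, hx, hy]
    | smul c x _ hx => rw [Matrix.mulVec_smul, Matrix.mulVec_smul, hx]
  intro v _ w hw
  rw [hmain w hw]
end

section
/- For a Hermitian operator H_I on a finite-dimensional space and a unit vector v, the subspace span{ e^{−i t H_I} v : t ∈ ℝ } equals the maximal Krylov subspace span{ v, H_I v, H_I² v, … } = span{ H_I^r v : r ∈ ℕ }. -/
open Matrix

section Aux

attribute [local instance] Matrix.linftyOpSemiNormedRing Matrix.linftyOpNormedRing
  Matrix.linftyOpNormedAlgebra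

variable {n : ℕ}

/-- `mulVec` by a fixed vector, as a linear map in the matrix. -/
noncomputable def mulVecByL (v : Fin n → ℂ) :
    Matrix (Fin n) (Fin n) ℂ →L[ℂ] (Fin n → ℂ) :=
  LinearMap.toContinuousLinearMap
    { toFun := fun M => M.mulVec v
      map_add' := fun M N => Matrix.add_mulVec M N v
      map_smul' := fun c M => Matrix.smul_mulVec c M v }

lemma mulVecByL_apply (v : Fin n → ℂ) (M : Matrix (Fin n) (Fin n) ℂ) :
    mulVecByL v M = M.mulVec v := rfl

lemma exp_mulVec_mem_krylov (A : Matrix (Fin n) (Fin n) ℂ) (v : Fin n → ℂ) (t : ℂ)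
    (K : Submodule ℂ (Fin n → ℂ)) (hK : ∀ r : ℕ, (A ^ r).mulVec v ∈ K) :
    (NormedSpace.exp (t • A)).mulVec v ∈ K := by
  have hs : HasSum (fun k : ℕ => ((k.factorial : ℂ)⁻¹) • (t • A) ^ k)
      (NormedSpace.exp (t • A)) := NormedSpace.exp_series_hasSum_exp' (t • A)
  have hs2 : HasSum (fun k : ℕ => mulVecByL v (((k.factorial : ℂ)⁻¹) • (t • A) ^ k))
      (mulVecByL v (NormedSpace.exp (t • A))) := (mulVecByL v).hasSum hs
  have hKclosed : IsClosed (K : Set (Fin n → ℂ)) := Submodule.closed_of_finiteDimensional K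
  have hmem : ∀ k : ℕ, mulVecByL v (((k.factorial : ℂ)⁻¹) • (t • A) ^ k) ∈ K := by
    intro k
    have : ((k.factorial : ℂ)⁻¹) • (t • A) ^ k = (((k.factorial : ℂ)⁻¹) * t ^ k) • A ^ k := by
      rw [smul_pow, smul_smul]
    rw [this]
    simp only [mulVecByL_apply, Matrix.smul_mulVec]
    exact K.smul_mem _ (hK k)
  have := hs2.tendsto_sum_nat
  refine hKclosed.mem_of_tendsto this ?_
  filter_upwards with s
  exact Submodule.sum_mem K fun k _ => hmem k

/-- Derivative trick: if `w` lies in a closed submodule stable under the flow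
`t ↦ exp(t • A)`, then `A.mulVec w` belongs to the submodule. -/
lemma mulVec_mem_of_flow (A : Matrix (Fin n) (Fin n) ℂ)
    (W : Submodule ℂ (Fin n → ℂ)) (w : Fin n → ℂ)
    (hflow : ∀ t : ℝ, (NormedSpace.exp ((t : ℂ) • A)).mulVec w ∈ W) :
    A.mulVec w ∈ W := by
  -- the curve f t = exp(t•A) w has derivative A w at 0
  have hexp := hasDerivAt_exp_smul_const A (0 : ℂ)
  have hcoe : HasDerivAt (fun t : ℝ => (t : ℂ)) 1 0 := by
    exact Complex.ofRealCLM.hasDerivAt (x := (0 : ℝ))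
  have hg : HasDerivAt (fun t : ℝ => NormedSpace.exp ((t : ℂ) • A)) A 0 := by
    have := HasDerivAt.scomp (x := (0 : ℝ))
      (g₁ := fun u : ℂ => NormedSpace.exp (u • A)) (h := fun t : ℝ => (t : ℂ))
      (by simp at hexp; exact hexp) hcoe
    simp at this
    exact this
  have hf : HasDerivAt (fun t : ℝ => (mulVecByL w) (NormedSpace.exp ((t : ℂ) • A)))
      (mulVecByL w A) 0 :=
    (((mulVecByL w).restrictScalars ℝ).hasFDerivAt.comp_hasDerivAt 0 hg)
  have hslope := hasDerivAt_iff_tendsto_slope.mp hf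
  have hWclosed : IsClosed (W : Set (Fin n → ℂ)) := Submodule.closed_of_finiteDimensional W
  have : mulVecByL w A ∈ W := by
    refine hWclosed.mem_of_tendsto hslope ?_
    filter_upwards [self_mem_nhdsWithin] with t (ht : t ≠ 0)
    have h1 : (mulVecByL w) (NormedSpace.exp ((t : ℂ) • A)) ∈ W := hflow t
    have h0 : (mulVecByL w) (NormedSpace.exp (((0 : ℝ) : ℂ) • A)) ∈ W := hflow 0
    have hsub : (mulVecByL w) (NormedSpace.exp ((t : ℂ) • A))
        - (mulVecByL w) (NormedSpace.exp (((0 : ℝ) : ℂ) • A)) ∈ W := W.sub_mem h1 h0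
    have : slope (fun t : ℝ => (mulVecByL w) (NormedSpace.exp ((t : ℂ) • A))) 0 t
        = (((t - 0)⁻¹ : ℝ) : ℂ) • ((mulVecByL w) (NormedSpace.exp ((t : ℂ) • A))
          - (mulVecByL w) (NormedSpace.exp (((0 : ℝ) : ℂ) • A))) := by
      rw [slope_def_module]
      norm_num
      ext i
      simp [Pi.smul_apply, Complex.real_smul]
    rw [this]
    exact W.smul_mem _ hsub
  exact this

end Aux

/-- For a Hermitian operator `H_I` on a finite-dimensional space and a
unit vector `v`, `span{ e^{−i t H_I} v : t ∈ ℝ }` equals the maximal Krylov subspace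
`span{ H_I^r v : r ∈ ℕ }`. -/
theorem dynamical_span_eq_krylov (n : ℕ)
    (HI : Matrix (Fin n) (Fin n) ℂ) (hH : HI.IsHermitian)
    (v : Fin n → ℂ) (hv : star v ⬝ᵥ v = 1) :
    Submodule.span ℂ
        {w | ∃ t : ℝ, w = (NormedSpace.exp ((-(Complex.I * t)) • HI)).mulVec v}
      = Submodule.span ℂ {w | ∃ r : ℕ, w = (HI ^ r).mulVec v} := by
  letI : SeminormedRing (Matrix (Fin n) (Fin n) ℂ) := Matrix.linftyOpSemiNormedRing
  letI : NormedRing (Matrix (Fin n) (Fin n) ℂ) := Matrix.linftyOpNormedRing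
  letI : NormedAlgebra ℂ (Matrix (Fin n) (Fin n) ℂ) := Matrix.linftyOpNormedAlgebra
  set A : Matrix (Fin n) (Fin n) ℂ := (-Complex.I) • HI with hA
  have hrw : ∀ t : ℝ, (-(Complex.I * (t : ℂ))) • HI = (t : ℂ) • A := by
    intro t
    rw [hA, smul_smul]
    ring_nf
  set W : Submodule ℂ (Fin n → ℂ) :=
    Submodule.span ℂ {w | ∃ t : ℝ, w = (NormedSpace.exp ((-(Complex.I * t)) • HI)).mulVec v}
    with hWdef
  set K : Submodule ℂ (Fin n → ℂ) :=
    Submodule.span ℂ {w | ∃ r : ℕ, w = (HI ^ r).mulVec v} with hKdef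
  have hgen : ∀ t : ℝ, (NormedSpace.exp ((t : ℂ) • A)).mulVec v ∈ W := by
    intro t
    rw [← hrw t]
    exact Submodule.subset_span ⟨t, rfl⟩
  have hKpow : ∀ r : ℕ, (HI ^ r).mulVec v ∈ K :=
    fun r => Submodule.subset_span ⟨r, rfl⟩
  -- Krylov subspace contains all A^r v
  have hKA : ∀ r : ℕ, (A ^ r).mulVec v ∈ K := by
    intro r
    have : A ^ r = ((-Complex.I) ^ r) • HI ^ r := by rw [hA, smul_pow]
    rw [this, Matrix.smul_mulVec]
    exact K.smul_mem _ (hKpow r)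
  apply le_antisymm
  · -- W ≤ K
    rw [hWdef]
    refine Submodule.span_le.mpr ?_
    rintro w ⟨t, rfl⟩
    rw [hrw t]
    exact exp_mulVec_mem_krylov A v (t : ℂ) K hKA
  · -- K ≤ W
    -- W is stable under the flow
    have hflowW : ∀ s : ℝ, ∀ w ∈ W, (NormedSpace.exp ((s : ℂ) • A)).mulVec w ∈ W := by
      intro s w hw
      induction hw using Submodule.span_induction with
      | mem x hx =>
        obtain ⟨t, rfl⟩ := hx
        rw [hrw t, Matrix.mulVec_mulVec, ← Matrix.exp_add_of_commute]
        · have : (s : ℂ) • A + (t : ℂ) • A = ((s + t : ℝ) : ℂ) • A := by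
            push_cast; rw [add_smul]
          rw [this]
          exact hgen (s + t)
        · exact (Commute.refl A).smul_left _ |>.smul_right _
      | zero => simpa [Matrix.mulVec_zero] using W.zero_mem
      | add x y _ _ hx hy => rw [Matrix.mulVec_add]; exact W.add_mem hx hy
      | smul c x _ hx => rw [Matrix.mulVec_smul]; exact W.smul_mem c hx
    -- hence W is stable under A
    have hAW : ∀ w ∈ W, A.mulVec w ∈ W := by
      intro w hw
      exact mulVec_mem_of_flow A W w (fun t => hflowW t w hw)
    have hHW : ∀ w ∈ W, HI.mulVec w ∈ W := by
      intro w hw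
      have : HI.mulVec w = Complex.I • (A.mulVec w) := by
        rw [← Matrix.smul_mulVec, hA, smul_smul]
        norm_num [Complex.I_mul_I]
      rw [this]
      exact W.smul_mem _ (hAW w hw)
    have hvW : v ∈ W := by
      have := hgen 0
      simpa [NormedSpace.exp_zero] using this
    rw [hKdef]
    refine Submodule.span_le.mpr ?_
    rintro w ⟨r, rfl⟩
    induction r with
    | zero => simpa using hvW
    | succ r ih =>
      rw [pow_succ', ← Matrix.mulVec_mulVec]
      exact hHW _ ih
end

section
/- Let J₁,J₂,J₃ be the spin-j su(2) generators on ℂⁿ (n = 2j+1) and T₁,T₂,T₃ the adjoint (3-dimensional) su(2) generators with (T_α)_{βγ} = −i ε_{αγβ}. Define π_S(g) = exp(−iθ Σ_α n_α J_α) and π_E(g) = exp(−iθ Σ_α n_α T_α) for a unit vector n ∈ ℝ³ and θ ∈ ℝ, and V ψ = (1/√(j(j+1))) Σ_α e_α ⊗ J_α ψ. Then (π_E(g) ⊗ π_S(g)) V = V π_S(g). -/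
open Matrix
open scoped Kronecker

namespace LSCov

open NormedSpace Nat

noncomputable def kronRightAlgHom (m p : Type*) [Fintype m] [DecidableEq m]
    [Fintype p] [DecidableEq p] :
    Matrix m m ℂ →ₐ[ℂ] Matrix (m × p) (m × p) ℂ where
  toFun X := X ⊗ₖ (1 : Matrix p p ℂ)
  map_one' := Matrix.one_kronecker_one
  map_mul' X Y := by rw [← Matrix.mul_kronecker_mul, Matrix.one_mul]
  map_zero' := Matrix.zero_kronecker _
  map_add' X Y := Matrix.add_kronecker X Y 1
  commutes' r := by
    simp only [Algebra.algebraMap_eq_smul_one, Matrix.smul_kronecker,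
      Matrix.one_kronecker_one]

noncomputable def kronLeftAlgHom (m p : Type*) [Fintype m] [DecidableEq m]
    [Fintype p] [DecidableEq p] :
    Matrix p p ℂ →ₐ[ℂ] Matrix (m × p) (m × p) ℂ where
  toFun X := (1 : Matrix m m ℂ) ⊗ₖ X
  map_one' := Matrix.one_kronecker_one
  map_mul' X Y := by rw [← Matrix.mul_kronecker_mul, Matrix.one_mul]
  map_zero' := Matrix.kronecker_zero _
  map_add' X Y := Matrix.kronecker_add 1 X Y
  commutes' r := by
    simp only [Algebra.algebraMap_eq_smul_one, Matrix.kronecker_smul,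
      Matrix.one_kronecker_one]

theorem exp_kron_right {m p : Type*} [Fintype m] [DecidableEq m] [Fintype p] [DecidableEq p]
    (X : Matrix m m ℂ) :
    exp (X ⊗ₖ (1 : Matrix p p ℂ)) = (exp X) ⊗ₖ (1 : Matrix p p ℂ) := by
  letI : SeminormedRing (Matrix m m ℂ) := Matrix.linftyOpSemiNormedRing
  letI : NormedRing (Matrix m m ℂ) := Matrix.linftyOpNormedRing
  letI : NormedAlgebra ℂ (Matrix m m ℂ) := Matrix.linftyOpNormedAlgebra
  letI : NormedAlgebra ℚ (Matrix m m ℂ) := Matrix.linftyOpNormedAlgebra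
  letI : SeminormedRing (Matrix (m × p) (m × p) ℂ) := Matrix.linftyOpSemiNormedRing
  letI : NormedRing (Matrix (m × p) (m × p) ℂ) := Matrix.linftyOpNormedRing
  letI : NormedAlgebra ℂ (Matrix (m × p) (m × p) ℂ) := Matrix.linftyOpNormedAlgebra
  have hc : Continuous (kronRightAlgHom m p) :=
    (kronRightAlgHom m p).toLinearMap.continuous_of_finiteDimensional
  exact (map_exp (kronRightAlgHom m p) hc X).symm

theorem exp_kron_left {m p : Type*} [Fintype m] [DecidableEq m] [Fintype p] [DecidableEq p]
    (X : Matrix p p ℂ) :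
    exp ((1 : Matrix m m ℂ) ⊗ₖ X) = (1 : Matrix m m ℂ) ⊗ₖ (exp X) := by
  letI : SeminormedRing (Matrix p p ℂ) := Matrix.linftyOpSemiNormedRing
  letI : NormedRing (Matrix p p ℂ) := Matrix.linftyOpNormedRing
  letI : NormedAlgebra ℂ (Matrix p p ℂ) := Matrix.linftyOpNormedAlgebra
  letI : NormedAlgebra ℚ (Matrix p p ℂ) := Matrix.linftyOpNormedAlgebra
  letI : SeminormedRing (Matrix (m × p) (m × p) ℂ) := Matrix.linftyOpSemiNormedRing
  letI : NormedRing (Matrix (m × p) (m × p) ℂ) := Matrix.linftyOpNormedRing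
  letI : NormedAlgebra ℂ (Matrix (m × p) (m × p) ℂ) := Matrix.linftyOpNormedAlgebra
  have hc : Continuous (kronLeftAlgHom m p) :=
    (kronLeftAlgHom m p).toLinearMap.continuous_of_finiteDimensional
  exact (map_exp (kronLeftAlgHom m p) hc X).symm

theorem exp_intertwine {P q : Type*} [Fintype P] [DecidableEq P] [Fintype q] [DecidableEq q]
    (L : Matrix P P ℂ) (A : Matrix q q ℂ) (V : Matrix P q ℂ) (h : L * V = V * A) :
    exp L * V = V * exp A := by
  have hpow : ∀ m : ℕ, L ^ m * V = V * A ^ m := by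
    intro m
    induction m with
    | zero => simp
    | succ k ih =>
      rw [pow_succ, pow_succ, Matrix.mul_assoc, h, ← Matrix.mul_assoc, ih, Matrix.mul_assoc]
  letI : SeminormedRing (Matrix P P ℂ) := Matrix.linftyOpSemiNormedRing
  letI : NormedRing (Matrix P P ℂ) := Matrix.linftyOpNormedRing
  letI : NormedAlgebra ℂ (Matrix P P ℂ) := Matrix.linftyOpNormedAlgebra
  letI : SeminormedRing (Matrix q q ℂ) := Matrix.linftyOpSemiNormedRing
  letI : NormedRing (Matrix q q ℂ) := Matrix.linftyOpNormedRing
  letI : NormedAlgebra ℂ (Matrix q q ℂ) := Matrix.linftyOpNormedAlgebra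
  letI : NormedAddCommGroup (Matrix P q ℂ) := Matrix.linftyOpNormedAddCommGroup
  letI : NormedSpace ℂ (Matrix P q ℂ) := Matrix.linftyOpNormedSpace
  have hs1 : Summable fun m : ℕ => (m !⁻¹ : ℂ) • L ^ m := expSeries_summable' (𝕂 := ℂ) L
  have hs2 : Summable fun m : ℕ => (m !⁻¹ : ℂ) • A ^ m := expSeries_summable' (𝕂 := ℂ) A
  let g : Matrix P P ℂ →ₗ[ℂ] Matrix P q ℂ :=
    { toFun := fun X => X * V
      map_add' := fun X Y => Matrix.add_mul X Y V
      map_smul' := fun r X => Matrix.smul_mul r X V }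
  let g' : Matrix q q ℂ →ₗ[ℂ] Matrix P q ℂ :=
    { toFun := fun X => V * X
      map_add' := fun X Y => Matrix.mul_add V X Y
      map_smul' := fun r X => (Matrix.mul_smul V r X) }
  have hg : Continuous g := g.continuous_of_finiteDimensional
  have hg' : Continuous g' := g'.continuous_of_finiteDimensional
  have h1 : exp L * V = ∑' m : ℕ, (m !⁻¹ : ℂ) • (L ^ m * V) := by
    rw [exp_eq_tsum ℂ]
    have := (hs1.hasSum.map g.toAddMonoidHom hg).tsum_eq
    simp only [LinearMap.toAddMonoidHom_coe, Function.comp] at this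
    calc (∑' m : ℕ, (m !⁻¹ : ℂ) • L ^ m) * V
        = g (∑' m : ℕ, (m !⁻¹ : ℂ) • L ^ m) := rfl
      _ = ∑' m : ℕ, g ((m !⁻¹ : ℂ) • L ^ m) := this.symm
      _ = ∑' m : ℕ, (m !⁻¹ : ℂ) • (L ^ m * V) := by
          refine tsum_congr fun m => ?_
          simp [g, Matrix.smul_mul]
  have h2 : V * exp A = ∑' m : ℕ, (m !⁻¹ : ℂ) • (V * A ^ m) := by
    rw [exp_eq_tsum ℂ]
    have := (hs2.hasSum.map g'.toAddMonoidHom hg').tsum_eq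
    simp only [LinearMap.toAddMonoidHom_coe, Function.comp] at this
    calc V * (∑' m : ℕ, (m !⁻¹ : ℂ) • A ^ m)
        = g' (∑' m : ℕ, (m !⁻¹ : ℂ) • A ^ m) := rfl
      _ = ∑' m : ℕ, g' ((m !⁻¹ : ℂ) • A ^ m) := this.symm
      _ = ∑' m : ℕ, (m !⁻¹ : ℂ) • (V * A ^ m) := by
          refine tsum_congr fun m => ?_
          simp [g', Matrix.mul_smul]
  rw [h1, h2]
  exact tsum_congr fun m => by rw [hpow m]

end LSCov

/-- Proposition 8: Let `J₁,J₂,J₃` be the spin-`j` `su(2)` generators on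
`ℂⁿ` (`n = 2j+1`) and `T₁,T₂,T₃` the adjoint (3-dimensional) `su(2)` generators with
`(T_α)_{βγ} = −i ε_{αγβ}`.  Define `π_S(g) = exp(−iθ Σ_α n_α J_α)`,
`π_E(g) = exp(−iθ Σ_α n_α T_α)` for a unit vector `n ∈ ℝ³` and `θ ∈ ℝ`, and
`V ψ = (1/√(j(j+1))) Σ_α e_α ⊗ J_α ψ`.  Then `(π_E(g) ⊗ π_S(g)) V = V π_S(g)`. -/
theorem landau_streater_covariance (n : ℕ) (j : ℝ) (hj : 0 < j)
    (hn : (n : ℝ) = 2 * j + 1)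
    (J : Fin 3 → Matrix (Fin n) (Fin n) ℂ)
    (hherm : ∀ α, (J α).IsHermitian)
    (hcomm12 : J 0 * J 1 - J 1 * J 0 = Complex.I • J 2)
    (hcomm23 : J 1 * J 2 - J 2 * J 1 = Complex.I • J 0)
    (hcomm31 : J 2 * J 0 - J 0 * J 2 = Complex.I • J 1)
    (hcasimir : J 0 ^ 2 + J 1 ^ 2 + J 2 ^ 2
      = ((j * (j + 1) : ℝ) : ℂ) • (1 : Matrix (Fin n) (Fin n) ℂ))
    (T : Fin 3 → Matrix (Fin 3) (Fin 3) ℂ)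
    (hT1 : T 0 = !![0, 0, 0; 0, 0, -Complex.I; 0, Complex.I, 0])
    (hT2 : T 1 = !![0, 0, Complex.I; 0, 0, 0; -Complex.I, 0, 0])
    (hT3 : T 2 = !![0, -Complex.I, 0; Complex.I, 0, 0; 0, 0, 0])
    (V : Matrix (Fin 3 × Fin n) (Fin n) ℂ)
    (hV : ∀ (α : Fin 3) (i k : Fin n),
      V (α, i) k = ((1 / Real.sqrt (j * (j + 1)) : ℝ) : ℂ) * J α i k)
    (θ n1 n2 n3 : ℝ) (hunit : n1 ^ 2 + n2 ^ 2 + n3 ^ 2 = 1)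
    (πS : Matrix (Fin n) (Fin n) ℂ)
    (hπS : πS = NormedSpace.exp ((-(Complex.I * θ))
      • ((n1 : ℂ) • J 0 + (n2 : ℂ) • J 1 + (n3 : ℂ) • J 2)))
    (πE : Matrix (Fin 3) (Fin 3) ℂ)
    (hπE : πE = NormedSpace.exp ((-(Complex.I * θ))
      • ((n1 : ℂ) • T 0 + (n2 : ℂ) • T 1 + (n3 : ℂ) • T 2))) :
    (πE ⊗ₖ πS) * V = V * πS := by
  set c : ℂ := -(Complex.I * θ) with hc
  set A : Matrix (Fin n) (Fin n) ℂ := (n1 : ℂ) • J 0 + (n2 : ℂ) • J 1 + (n3 : ℂ) • J 2 with hA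
  set B : Matrix (Fin 3) (Fin 3) ℂ := (n1 : ℂ) • T 0 + (n2 : ℂ) • T 1 + (n3 : ℂ) • T 2 with hB
  -- commutator facts
  have h12 : J 0 * J 1 = Complex.I • J 2 + J 1 * J 0 := sub_eq_iff_eq_add.mp hcomm12
  have h23 : J 1 * J 2 = Complex.I • J 0 + J 2 * J 1 := sub_eq_iff_eq_add.mp hcomm23
  have h31 : J 2 * J 0 = Complex.I • J 1 + J 0 * J 2 := sub_eq_iff_eq_add.mp hcomm31
  -- key Lie-algebra intertwining identity
  have k0 : (∑ β : Fin 3, B 0 β • J β) = J 0 * A - A * J 0 := by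
    simp only [hB, hA, hT1, hT2, hT3, Fin.sum_univ_three, Matrix.add_apply, Matrix.smul_apply,
      smul_eq_mul, Fin.isValue]
    norm_num [Matrix.cons_val_zero, Matrix.cons_val_one, Matrix.head_cons, Matrix.cons_val_two,
      Matrix.tail_cons, Matrix.vecHead, Matrix.vecTail]
    simp only [mul_add, add_mul, Matrix.mul_smul, Matrix.smul_mul, h12, h23, h31]
    simp only [← Complex.coe_algebraMap]
    module
  have k1 : (∑ β : Fin 3, B 1 β • J β) = J 1 * A - A * J 1 := by
    simp only [hB, hA, hT1, hT2, hT3, Fin.sum_univ_three, Matrix.add_apply, Matrix.smul_apply,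
      smul_eq_mul, Fin.isValue]
    norm_num [Matrix.cons_val_zero, Matrix.cons_val_one, Matrix.head_cons, Matrix.cons_val_two,
      Matrix.tail_cons, Matrix.vecHead, Matrix.vecTail]
    simp only [mul_add, add_mul, Matrix.mul_smul, Matrix.smul_mul, h12, h23, h31]
    simp only [← Complex.coe_algebraMap]
    module
  have k2 : (∑ β : Fin 3, B 2 β • J β) = J 2 * A - A * J 2 := by
    simp only [hB, hA, hT1, hT2, hT3, Fin.sum_univ_three, Matrix.add_apply, Matrix.smul_apply,
      smul_eq_mul, Fin.isValue]
    norm_num [Matrix.cons_val_zero, Matrix.cons_val_one, Matrix.head_cons, Matrix.cons_val_two,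
      Matrix.tail_cons, Matrix.vecHead, Matrix.vecTail]
    simp only [mul_add, add_mul, Matrix.mul_smul, Matrix.smul_mul, h12, h23, h31]
    simp only [← Complex.coe_algebraMap]
    module
  have hkey : ∀ α : Fin 3, (∑ β : Fin 3, B α β • J β) = J α * A - A * J α := by
    intro α
    fin_cases α
    · exact k0
    · exact k1
    · exact k2
  -- the unscaled intertwining at matrix level
  set W : Matrix (Fin 3 × Fin n) (Fin n) ℂ :=
    Matrix.of (fun p k => J p.1 p.2 k) with hW
  have hVW : V = ((1 / Real.sqrt (j * (j + 1)) : ℝ) : ℂ) • W := by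
    ext ⟨α, i⟩ k
    simp [hW, hV α i k, Matrix.smul_apply, smul_eq_mul]
  have hmainW : (B ⊗ₖ (1 : Matrix (Fin n) (Fin n) ℂ)
      + (1 : Matrix (Fin 3) (Fin 3) ℂ) ⊗ₖ A) * W = W * A := by
    ext ⟨α, i⟩ k
    have hk := congrFun (congrFun (hkey α) i) k
    simp only [Matrix.sum_apply, Matrix.smul_apply, smul_eq_mul, Matrix.sub_apply,
      Matrix.mul_apply] at hk
    simp only [Matrix.add_mul, Matrix.add_apply, Matrix.mul_apply, Fintype.sum_prod_type,
      Matrix.kroneckerMap_apply, Matrix.one_apply, hW, Matrix.of_apply, ite_mul, mul_ite,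
      mul_zero, zero_mul, mul_one, one_mul, Finset.sum_ite_eq, Finset.sum_ite_eq',
      Finset.mem_univ, if_true]
    simp only [add_mul, ite_mul, zero_mul, Finset.sum_add_distrib, Finset.sum_ite_eq,
      Finset.sum_ite_eq', Finset.mem_univ, if_true, Finset.sum_ite_irrel, Finset.sum_const_zero]
    linear_combination hk
  have hmain : ((c • B) ⊗ₖ (1 : Matrix (Fin n) (Fin n) ℂ)
      + (1 : Matrix (Fin 3) (Fin 3) ℂ) ⊗ₖ (c • A)) * V = V * (c • A) := by
    rw [Matrix.smul_kronecker, Matrix.kronecker_smul, ← smul_add, hVW, Matrix.smul_mul,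
      Matrix.mul_smul, hmainW, Matrix.smul_mul, Matrix.mul_smul]
    exact smul_comm c _ _
  -- exponentiate
  have hcommute : Commute ((c • B) ⊗ₖ (1 : Matrix (Fin n) (Fin n) ℂ))
      ((1 : Matrix (Fin 3) (Fin 3) ℂ) ⊗ₖ (c • A)) := by
    unfold Commute SemiconjBy
    rw [← Matrix.mul_kronecker_mul, ← Matrix.mul_kronecker_mul, Matrix.mul_one,
      Matrix.one_mul, Matrix.mul_one, Matrix.one_mul]
  have hsplit : NormedSpace.exp ((c • B) ⊗ₖ (1 : Matrix (Fin n) (Fin n) ℂ)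
        + (1 : Matrix (Fin 3) (Fin 3) ℂ) ⊗ₖ (c • A))
      = (NormedSpace.exp (c • B)) ⊗ₖ (NormedSpace.exp (c • A)) := by
    rw [Matrix.exp_add_of_commute _ _ hcommute, LSCov.exp_kron_right, LSCov.exp_kron_left,
      ← Matrix.mul_kronecker_mul, Matrix.mul_one, Matrix.one_mul]
  rw [hπE, hπS, ← hsplit]
  exact LSCov.exp_intertwine _ _ _ hmain
end
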